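/- arXiv:0803.2369 — 2 statements merged into one kernel-verified Lean document; each statement's English description precedes it below -/
import Mathlib

section
/- Let A be a commutative ring and I a proper ideal. Then ν̄_I is an order function: for all x, y ∈ A, ν̄_I(x+y) ≥ min(ν̄_I(x), ν̄_I(y)), ν̄_I(xy) ≥ ν̄_I(x) + ν̄_I(y), ν̄_I(0) = ∞ and ν̄_I(1) = 0. -/
open Filter ENNReal

/-- The `I`-adic order `ν_I(J)` of an ideal `J`: the supremum of the `n` with `J ⊆ Iⁿ`,
as an extended nonnegative real (`∞` if `J ⊆ Iⁿ` for all `n`). -/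
noncomputable def idealOrd {A : Type*} [CommRing A] (I J : Ideal A) : ℝ≥0∞ :=
  ⨆ n ∈ {n : ℕ | J ≤ I ^ n}, (n : ℝ≥0∞)

/-- `ν̄_I(J) = lim_{k→∞} ν_I(Jᵏ)/k`.  (The limit exists, so it equals the `limsup`,
which we use as the definition.) -/
noncomputable def idealNubar {A : Type*} [CommRing A] (I J : Ideal A) : ℝ≥0∞ :=
  Filter.atTop.limsup fun k : ℕ => idealOrd I (J ^ k) / (k : ℝ≥0∞)

/-- `ν̄_I(x)` for an element `x`, i.e. `ν̄_I` of the principal ideal `(x)`. -/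
noncomputable def elemNubar {A : Type*} [CommRing A] (I : Ideal A) (x : A) : ℝ≥0∞ :=
  idealNubar I (Ideal.span {x})

/-!
Everything follows from the description `ν̄_I(x) = sup {c / k : k ≥ 1, xᵏ ∈ Iᶜ}`: the limsup is at
least every `c / k` because `x^{nk} ∈ I^{nc}` for all `n`, and at most the supremum by definition.
Then `xᵏ ∈ Iᶜ`, `yˡ ∈ Iᵈ` give `(xy)^{kl} ∈ I^{cl+dk}`, which is superadditivity. For the sum,
after passing to a common exponent `xᵐ, yᵐ ∈ Iᵉ`, the binomial formula gives
`(x + y)^{(j+1)m} ∈ I^{je}`, so `ν̄_I(x + y) ≥ (j / (j + 1)) · e / m` for every `j`.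
-/

open Topology NNReal

theorem ENNReal.le_of_forall_natCast_div_add_one_mul_le {t V : ℝ≥0∞}
    (h : ∀ j : ℕ, (j / (j + 1) : ℝ≥0∞) * t ≤ V) : t ≤ V := by
  have hlim : Tendsto (fun j : ℕ => (j / (j + 1) : ℝ≥0∞)) atTop (𝓝 1) := by
    refine (ENNReal.tendsto_coe.2 (tendsto_natCast_div_add_atTop (1 : ℝ≥0))).congr fun j => ?_
    rw [ENNReal.coe_div (by positivity)]
    push_cast
    rfl
  simpa using le_of_tendsto' (ENNReal.Tendsto.mul_const hlim (Or.inl one_ne_zero)) h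

namespace Ideal

variable {R : Type*} [CommSemiring R] {I : Ideal R} {x y : R} {m e : ℕ}

theorem pow_mem_pow_mul_div (hx : x ^ m ∈ I ^ e) (i : ℕ) : x ^ i ∈ I ^ (e * (i / m)) := by
  have hsplit : x ^ i = (x ^ m) ^ (i / m) * x ^ (i % m) := by
    rw [← pow_mul, ← pow_add, Nat.div_add_mod]
  rw [hsplit, pow_mul]
  exact mul_mem_right _ _ (pow_mem_pow hx _)

theorem mul_pow_mem_pow {k l c d : ℕ} (hx : x ^ k ∈ I ^ c) (hy : y ^ l ∈ I ^ d) :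
    (x * y) ^ (k * l) ∈ I ^ (c * l + d * k) := by
  have hsplit : (x * y) ^ (k * l) = (x ^ k) ^ l * (y ^ l) ^ k := by
    rw [mul_pow, ← pow_mul, ← pow_mul, mul_comm l k]
  rw [hsplit, pow_add, pow_mul, pow_mul]
  exact mul_mem_mul (pow_mem_pow hx l) (pow_mem_pow hy k)

/-- Each monomial `xⁱ yᴺ⁻ⁱ` of `(x + y)ᴺ`, `N = (j + 1) m`, has `⌊i/m⌋ + ⌊(N - i)/m⌋ ≥ j`. -/
theorem add_pow_mem_pow (hm : m ≠ 0) (hx : x ^ m ∈ I ^ e) (hy : y ^ m ∈ I ^ e) (j : ℕ) :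
    (x + y) ^ ((j + 1) * m) ∈ I ^ (j * e) := by
  rw [add_pow]
  refine Ideal.sum_mem _ fun i hi => mul_mem_right _ _ ?_
  have hi : i ≤ (j + 1) * m := Nat.lt_succ_iff.mp (Finset.mem_range.mp hi)
  have hfloor : j ≤ i / m + ((j + 1) * m - i) / m := by
    have := Nat.add_div_le_div_add_div_add_one i ((j + 1) * m - i) m
    rw [Nat.add_sub_cancel' hi, Nat.mul_div_cancel _ (Nat.pos_of_ne_zero hm)] at this
    omega
  have hmem := mul_mem_mul (pow_mem_pow_mul_div hx i) (pow_mem_pow_mul_div hy ((j + 1) * m - i))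
  rw [← pow_add, ← mul_add] at hmem
  exact pow_le_pow_right (by rw [mul_comm]; exact Nat.mul_le_mul_left e hfloor) hmem

end Ideal

section

variable {A : Type*} [CommRing A] {I : Ideal A} {x y : A} {k c : ℕ}

theorem natCast_le_idealOrd {J : Ideal A} {n : ℕ} (h : J ≤ I ^ n) : (n : ℝ≥0∞) ≤ idealOrd I J :=
  le_biSup _ h

theorem div_le_elemNubar (hk : k ≠ 0) (h : x ^ k ∈ I ^ c) : (c : ℝ≥0∞) / k ≤ elemNubar I x := by
  refine le_limsup_of_frequently_le (frequently_atTop.2 fun N => ⟨(N + 1) * k, ?_, ?_⟩)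
    (by isBoundedDefault)
  · nlinarith [Nat.one_le_iff_ne_zero.2 hk]
  · have hpow : Ideal.span {x} ^ ((N + 1) * k) ≤ I ^ ((N + 1) * c) := by
      rw [Ideal.span_singleton_pow, Ideal.span_singleton_le_iff_mem, pow_mul', pow_mul']
      exact Ideal.pow_mem_pow h _
    calc (c : ℝ≥0∞) / k = ((N + 1) * c : ℕ) / ((N + 1) * k : ℕ) := by
          push_cast
          rw [ENNReal.mul_div_mul_left _ _ (by positivity) (by simp)]
      _ ≤ _ := by gcongr; exact natCast_le_idealOrd hpow

theorem exists_pow_mem_of_lt_elemNubar {d : ℝ≥0∞} (h : d < elemNubar I x) :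
    ∃ k c : ℕ, k ≠ 0 ∧ x ^ k ∈ I ^ c ∧ d < (c : ℝ≥0∞) / k := by
  obtain ⟨k, hd, hk⟩ := ((frequently_lt_of_lt_limsup (by isBoundedDefault) h).and_eventually
    (eventually_ne_atTop 0)).exists
  simp only [idealOrd, ENNReal.iSup_div, lt_iSup_iff] at hd
  obtain ⟨c, hc, hd⟩ := hd
  exact ⟨k, c, hk, (Ideal.span_singleton_le_iff_mem _).1 (Ideal.span_singleton_pow x k ▸ hc), hd⟩

theorem elemNubar_eq_iSup (I : Ideal A) (x : A) :
    elemNubar I x = ⨆ p : ℕ × ℕ, ⨆ (_ : p.1 ≠ 0 ∧ x ^ p.1 ∈ I ^ p.2), (p.2 : ℝ≥0∞) / p.1 := by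
  refine le_antisymm (le_of_forall_lt fun d hd => ?_)
    (iSup₂_le fun p hp => div_le_elemNubar hp.1 hp.2)
  obtain ⟨k, c, hk, hc, hd⟩ := exists_pow_mem_of_lt_elemNubar hd
  exact hd.trans_le (le_iSup₂_of_le (k, c) ⟨hk, hc⟩ le_rfl)

theorem div_le_elemNubar_add {m e : ℕ} (hm : m ≠ 0) (hx : x ^ m ∈ I ^ e) (hy : y ^ m ∈ I ^ e) :
    (e : ℝ≥0∞) / m ≤ elemNubar I (x + y) := by
  refine ENNReal.le_of_forall_natCast_div_add_one_mul_le fun j => ?_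
  calc (j / (j + 1) : ℝ≥0∞) * (e / m) = ((j * e : ℕ) : ℝ≥0∞) / ((j + 1) * m : ℕ) := by
        push_cast
        rw [ENNReal.mul_div_mul_comm (Or.inl (by positivity)) (Or.inl (by simp))]
    _ ≤ elemNubar I (x + y) :=
        div_le_elemNubar (mul_ne_zero j.succ_ne_zero hm) (Ideal.add_pow_mem_pow hm hx hy j)

theorem min_elemNubar_le_elemNubar_add (I : Ideal A) (x y : A) :
    min (elemNubar I x) (elemNubar I y) ≤ elemNubar I (x + y) := by
  refine le_of_forall_lt fun d hd => ?_
  obtain ⟨k, c, hk, hx, hdx⟩ := exists_pow_mem_of_lt_elemNubar (lt_min_iff.1 hd).1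
  obtain ⟨l, c', hl, hy, hdy⟩ := exists_pow_mem_of_lt_elemNubar (lt_min_iff.1 hd).2
  have hx' : x ^ (k * l) ∈ I ^ min (c * l) (c' * k) :=
    Ideal.pow_le_pow_right (min_le_left _ _)
      (by rw [pow_mul, pow_mul]; exact Ideal.pow_mem_pow hx l)
  have hy' : y ^ (k * l) ∈ I ^ min (c * l) (c' * k) :=
    Ideal.pow_le_pow_right (min_le_right _ _)
      (by rw [mul_comm k, pow_mul, pow_mul]; exact Ideal.pow_mem_pow hy k)
  refine lt_of_lt_of_le ?_ (div_le_elemNubar_add (mul_ne_zero hk hl) hx' hy')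
  have hdiv : Monotone fun t : ℝ≥0∞ => t / ((k * l : ℕ) : ℝ≥0∞) :=
    fun _ _ h => ENNReal.div_le_div_right h _
  rw [Nat.mono_cast.map_min, hdiv.map_min]
  push_cast
  rw [ENNReal.mul_div_mul_right _ _ (by simpa) (by simp), mul_comm (k : ℝ≥0∞),
    ENNReal.mul_div_mul_right _ _ (by simpa) (by simp)]
  exact lt_min hdx hdy

theorem elemNubar_add_elemNubar_le_elemNubar_mul (I : Ideal A) (x y : A) :
    elemNubar I x + elemNubar I y ≤ elemNubar I (x * y) := by
  rw [elemNubar_eq_iSup I x, elemNubar_eq_iSup I y]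
  refine ENNReal.biSup_add_biSup_le' ⟨(1, 0), by simp⟩ ⟨(1, 0), by simp⟩
    fun ⟨k, c⟩ ⟨hk, hx⟩ ⟨l, d⟩ ⟨hl, hy⟩ => ?_
  calc (c : ℝ≥0∞) / k + (d : ℝ≥0∞) / l = ((c * l + d * k : ℕ) : ℝ≥0∞) / (k * l : ℕ) := by
        push_cast
        rw [← ENNReal.div_add_div_same, ENNReal.mul_div_mul_right _ _ (by simpa) (by simp),
          mul_comm (k : ℝ≥0∞), ENNReal.mul_div_mul_right _ _ (by simpa) (by simp)]
    _ ≤ elemNubar I (x * y) := div_le_elemNubar (mul_ne_zero hk hl) (Ideal.mul_pow_mem_pow hx hy)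

theorem elemNubar_zero (I : Ideal A) : elemNubar I 0 = ⊤ := by
  refine top_unique (ENNReal.iSup_natCast ▸ iSup_le fun c => ?_)
  simpa using div_le_elemNubar (I := I) one_ne_zero (x := 0) (c := c) (by simp)

theorem elemNubar_one (hI : I ≠ ⊤) : elemNubar I 1 = 0 := by
  rw [elemNubar_eq_iSup, ← nonpos_iff_eq_zero]
  refine iSup₂_le fun ⟨k, c⟩ ⟨_, h⟩ => ?_
  obtain rfl : c = 0 := by
    by_contra hc
    exact hI (I.eq_top_of_isUnit_mem (Ideal.pow_le_self hc (by simpa using h)) isUnit_one)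
  simp

end

/-- `ν̄_I` is an order function: `ν̄_I(x+y) ≥ min(ν̄_I(x), ν̄_I(y))`,
`ν̄_I(xy) ≥ ν̄_I(x) + ν̄_I(y)`, `ν̄_I(0) = ∞` and `ν̄_I(1) = 0`. -/
theorem elemNubar_isOrderFunction {A : Type*} [CommRing A] (I : Ideal A) (hI : I ≠ ⊤) :
    (∀ x y : A, min (elemNubar I x) (elemNubar I y) ≤ elemNubar I (x + y)) ∧
    (∀ x y : A, elemNubar I x + elemNubar I y ≤ elemNubar I (x * y)) ∧
    elemNubar I (0 : A) = ⊤ ∧ elemNubar I (1 : A) = 0 :=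
  ⟨min_elemNubar_le_elemNubar_add I, elemNubar_add_elemNubar_le_elemNubar_mul I, elemNubar_zero I,
    elemNubar_one hI⟩
end

section
/- Let A be a commutative ring, N its nilradical, I a proper ideal and J a finitely generated ideal of A. Let A₁ = A/N and I₁, J₁ the images of I, J in A₁. Then ν̄_I(J) = ν̄_{I₁}(J₁). -/
open Filter ENNReal

/-!
Pushing forward along any ring map can only enlarge `ν̄`, which gives `≤`. Conversely, if
`J₁ᵏ ⊆ I₁ⁿ` then the finitely generated ideal `Jᵏ` lies in `Iⁿ + N'` for a finitely generated
`N' ⊆ N`, so `N'ᵀ = 0` for some `T` and `J^{k(s+T)} ⊆ I^{ns}` for every `s`. As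
`ν_I(Jᵐ)/m ≤ ν_I(J^{ms})/(ms)`, every ratio `ν_I(Jᵐ)/m` is at most `ν̄_I(J)`; this gives
`ns ≤ k(s+T) ν̄_I(J)` for all `s`, hence `n / k ≤ ν̄_I(J)`.
-/

namespace Submodule

theorem FG.exists_fg_le_of_le_sup {R M : Type*} [Semiring R] [AddCommMonoid M] [Module R M]
    {K L N : Submodule R M} (hK : K.FG) (h : K ≤ L ⊔ N) : ∃ N' ≤ N, N'.FG ∧ K ≤ L ⊔ N' := by
  induction K, hK using fg_induction with
  | singleton x =>
    obtain ⟨a, ha, e, he, rfl⟩ := mem_sup.1 (h (mem_span_singleton_self x))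
    refine ⟨R ∙ e, (span_singleton_le_iff_mem _ _).2 he, fg_span_singleton e,
      (span_singleton_le_iff_mem _ _).2 ?_⟩
    exact add_mem (mem_sup_left ha) (mem_sup_right (mem_span_singleton_self e))
  | sup K₁ K₂ _ _ h₁ h₂ =>
    obtain ⟨N₁, hN₁, hfg₁, hK₁⟩ := h₁ (le_sup_left.trans h)
    obtain ⟨N₂, hN₂, hfg₂, hK₂⟩ := h₂ (le_sup_right.trans h)
    exact ⟨N₁ ⊔ N₂, sup_le hN₁ hN₂, hfg₁.sup hfg₂,
      sup_le (hK₁.trans (sup_le_sup_left le_sup_left _))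
        (hK₂.trans (sup_le_sup_left le_sup_right _))⟩

end Submodule

theorem ENNReal.le_of_forall_natCast_mul_le_add {x y c : ℝ≥0∞} (hc : c ≠ ∞)
    (h : ∀ s : ℕ, s * x ≤ s * y + c) : x ≤ y := by
  by_contra! hyx
  obtain ⟨s, hs⟩ := ENNReal.exists_nat_mul_gt (tsub_pos_of_lt hyx).ne' hc
  rw [ENNReal.mul_sub fun _ _ => ENNReal.natCast_ne_top s] at hs
  exact (tsub_le_iff_left.2 (h s)).not_gt hs

namespace Ideal

variable {A : Type*} [CommRing A]

theorem exists_pow_add_le_pow_of_le_sup_nilradical {K L : Ideal A} (hK : K.FG)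
    (h : K ≤ L ⊔ nilradical A) : ∃ T, ∀ s, K ^ (s + T) ≤ L ^ s := by
  obtain ⟨N, hN, hNfg, hKN⟩ := Submodule.FG.exists_fg_le_of_le_sup hK h
  obtain ⟨T, hT⟩ := (FG.isNilpotent_iff_le_nilradical hNfg).2 hN
  refine ⟨T, fun s => ?_⟩
  calc K ^ (s + T) ≤ (L ⊔ N) ^ (s + T) := pow_right_mono hKN _
    _ ≤ L ^ s ⊔ N ^ T := sup_pow_add_le_pow_sup_pow
    _ = L ^ s := by rw [hT, zero_eq_bot, sup_bot_eq]

theorem le_sup_nilradical_of_map_le {K L : Ideal A}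
    (h : K.map (Quotient.mk (nilradical A)) ≤ L.map (Quotient.mk (nilradical A))) :
    K ≤ L ⊔ nilradical A := by
  rwa [map_le_iff_le_comap, comap_map_quotientMk, sup_comm] at h

end Ideal

section

variable {A : Type*} [CommRing A] {I J : Ideal A}

theorem le_idealOrd {n : ℕ} (h : J ≤ I ^ n) : (n : ℝ≥0∞) ≤ idealOrd I J :=
  le_biSup _ h

theorem idealOrd_le_iff {x : ℝ≥0∞} : idealOrd I J ≤ x ↔ ∀ n : ℕ, J ≤ I ^ n → (n : ℝ≥0∞) ≤ x :=
  iSup₂_le_iff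

theorem idealOrd_mul_le_idealOrd_pow (s : ℕ) : idealOrd I J * s ≤ idealOrd I (J ^ s) := by
  simp only [idealOrd, ENNReal.iSup_mul]
  refine iSup₂_le fun n hn => ?_
  exact_mod_cast le_idealOrd (n := n * s) (by rw [pow_mul]; exact Ideal.pow_right_mono hn s)

theorem idealOrd_le_idealOrd_map {B : Type*} [CommRing B] (f : A →+* B) :
    idealOrd I J ≤ idealOrd (I.map f) (J.map f) :=
  idealOrd_le_iff.2 fun _ hn => le_idealOrd (by rw [← Ideal.map_pow]; exact Ideal.map_mono hn)

theorem idealNubar_le_idealNubar_map {B : Type*} [CommRing B] (f : A →+* B) :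
    idealNubar I J ≤ idealNubar (I.map f) (J.map f) :=
  limsup_le_limsup <| Eventually.of_forall fun k => by
    dsimp only
    rw [← Ideal.map_pow]
    gcongr
    exact idealOrd_le_idealOrd_map f

theorem idealOrd_pow_le_idealNubar_mul {m : ℕ} (hm : m ≠ 0) :
    idealOrd I (J ^ m) ≤ idealNubar I J * m := by
  rw [← ENNReal.div_le_iff (Nat.cast_ne_zero.2 hm) (natCast_ne_top m)]
  refine le_limsup_of_frequently_le' (frequently_atTop.2 fun a => ⟨m * (a + 1), ?_, ?_⟩)
  · nlinarith [Nat.pos_of_ne_zero hm]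
  calc idealOrd I (J ^ m) / m = idealOrd I (J ^ m) * (a + 1 : ℕ) / (m * (a + 1) : ℕ) := by
        rw [Nat.cast_mul, ENNReal.mul_div_mul_right _ _ (by positivity) (natCast_ne_top _)]
    _ ≤ idealOrd I (J ^ (m * (a + 1))) / (m * (a + 1) : ℕ) := by
        gcongr
        rw [pow_mul]
        exact idealOrd_mul_le_idealOrd_pow _

theorem natCast_le_idealNubar_mul {k n T : ℕ} (hk : k ≠ 0)
    (h : ∀ s, (J ^ k) ^ (s + T) ≤ (I ^ n) ^ s) : (n : ℝ≥0∞) ≤ idealNubar I J * k := by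
  set S := idealNubar I J
  rcases eq_or_ne S ∞ with hS | hS
  · simp [hS, hk]
  refine ENNReal.le_of_forall_natCast_mul_le_add (c := S * k * T) (by finiteness) fun s => ?_
  rcases eq_or_ne s 0 with rfl | hs
  · simp
  calc (s : ℝ≥0∞) * n = ((n * s : ℕ) : ℝ≥0∞) := by push_cast; ring
    _ ≤ idealOrd I (J ^ (k * (s + T))) := le_idealOrd (by rw [pow_mul, pow_mul]; exact h s)
    _ ≤ S * (k * (s + T) : ℕ) := idealOrd_pow_le_idealNubar_mul (by positivity)
    _ = s * (S * k) + S * k * T := by push_cast; ring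

end

theorem idealNubar_map_nilradical_general {A : Type*} [CommRing A] (I J : Ideal A)
    (hJ : J.FG) :
    idealNubar I J =
      idealNubar (I.map (Ideal.Quotient.mk (nilradical A)))
        (J.map (Ideal.Quotient.mk (nilradical A))) := by
  set π := Ideal.Quotient.mk (nilradical A)
  refine le_antisymm (idealNubar_le_idealNubar_map π) ?_
  refine limsup_le_of_le (by isBoundedDefault) (eventually_atTop.2 ⟨1, fun k hk => ?_⟩)
  refine ENNReal.div_le_of_le_mul (idealOrd_le_iff.2 fun n hn => ?_)
  rw [← Ideal.map_pow, ← Ideal.map_pow] at hn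
  obtain ⟨T, hT⟩ := Ideal.exists_pow_add_le_pow_of_le_sup_nilradical (Submodule.FG.pow hJ k)
    (Ideal.le_sup_nilradical_of_map_le hn)
  exact natCast_le_idealNubar_mul (by omega) hT

/-- If `N` is the nilradical of `A`, `I` a proper ideal, `J` a finitely
generated ideal, with images `I₁, J₁` in `A₁ = A/N`, then `ν̄_I(J) = ν̄_{I₁}(J₁)`. -/
theorem idealNubar_map_nilradical {A : Type*} [CommRing A] (I J : Ideal A)
    (hI : I ≠ ⊤) (hJ : J.FG) :
    idealNubar I J =
      idealNubar (I.map (Ideal.Quotient.mk (nilradical A)))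
        (J.map (Ideal.Quotient.mk (nilradical A))) :=
  idealNubar_map_nilradical_general I J hJ
end
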